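/- Let d ≥ 1, α ∈ [-1/2,∞)^d, δ ∈ [0,∞)^d, and for x,y ∈ (0,∞)^d, s ∈ [-1,1]^d set q₊(x,y,s) = |x|²+|y|²+2∑xᵢyᵢsᵢ. Then in dimension d = 1 with δ = 0: ∫_{[-1,1]} q₊(x,y,s)^{-1-α} Π_α(ds) ≲ 1 / w_α⁺(B(x,|x-y|)) for all x ≠ y in (0,∞), where Π_α(ds) = c_α (1-s²)^{α-1/2} ds (for α > -1/2) and w_α⁺(du) = u^{2α+1} du. -/

import Mathlib

open MeasureTheory Real Set intervalIntegral
set_option maxHeartbeats 2000000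

lemma NS_M (p t : ℝ) (h1 : 1 ≤ t) (h2 : t ≤ 2) : t ^ p ≤ max 1 ((2:ℝ) ^ p) := by
  rcases le_or_gt 0 p with h | h
  · exact le_max_of_le_right (Real.rpow_le_rpow (by linarith) h2 h)
  · exact le_max_of_le_left (Real.rpow_le_one_of_one_le_of_nonpos h1 h.le)

lemma NS_powint (p : ℝ) (hp : -1 < p) (c d : ℝ) (h0 : 0 ≤ c) (hcd : c ≤ d) :
    ∫ u in Set.Ioo c d, u ^ p = (d ^ (p+1) - c ^ (p+1))/(p+1) := by
  rw [← MeasureTheory.integral_Ioc_eq_integral_Ioo, ← intervalIntegral.integral_of_le hcd,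
    integral_rpow (Or.inl hp)]

lemma NS_shift_intgr (p : ℝ) (hp : -1 < p) :
    IntervalIntegrable (fun s : ℝ => (s + 1) ^ p) volume (-1) 1 := by
  have h := (intervalIntegrable_rpow' hp (a := 0) (b := 2)).comp_add_right 1
  norm_num at h
  exact h

lemma NS_shift_val (p : ℝ) (hp : -1 < p) :
    ∫ s in (-1:ℝ)..1, (s + 1) ^ p = 2 ^ (p+1) / (p+1) := by
  have h := intervalIntegral.integral_comp_add_right (a := (-1:ℝ)) (b := 1)
    (fun t : ℝ => t ^ p) 1
  norm_num at h
  rw [h, integral_rpow (Or.inl hp), Real.zero_rpow (by linarith : p + 1 ≠ 0)]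
  ring

lemma NS_refl_intgr (p : ℝ) (hp : -1 < p) :
    IntervalIntegrable (fun s : ℝ => (1 - s) ^ p) volume (-1) 1 := by
  have h := (intervalIntegrable_rpow' hp (a := 0) (b := 2)).comp_sub_left 1
  norm_num at h
  exact h.symm

lemma NS_refl_val (p : ℝ) (hp : -1 < p) :
    ∫ s in (-1:ℝ)..1, (1 - s) ^ p = 2 ^ (p+1) / (p+1) := by
  have h := intervalIntegral.integral_comp_neg (a := (-1:ℝ)) (b := 1)
    (fun s : ℝ => (s + 1) ^ p)
  norm_num at h
  rw [← NS_shift_val p hp, ← h]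
  apply intervalIntegral.integral_congr
  intro s _
  ring_nf


/-- One-dimensional case of the Nowak–Stempak lemma: for `α > -1/2`,
`∫_{[-1,1]} q₊(x,y,s)^{-1-α} Π_α(ds) ≲ 1 / w_α⁺(B(x,|x-y|))` for `x ≠ y` in `(0,∞)`,
where `Π_α(ds) = (1-s²)^{α-1/2} ds / (√π 2^α Γ(α+1/2))` and `w_α⁺(du) = u^{2α+1} du`. -/
theorem stmt_19 (α : ℝ) (hα : -1/2 < α) :
    ∃ C : ℝ, 0 < C ∧
      ∀ x y : ℝ, 0 < x → 0 < y → x ≠ y →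
        (∫ s in Set.Icc (-1 : ℝ) 1,
            (x^2 + y^2 + 2 * x * y * s) ^ (-(1 + α)) *
              ((1 - s^2) ^ (α - 1/2) / (Real.sqrt π * 2 ^ α * Real.Gamma (α + 1/2))))
          ≤ C /
            (∫ u in Set.Ioo (max 0 (x - |x - y|)) (x + |x - y|), u ^ (2 * α + 1)) := by
  set p : ℝ := α - 1/2 with hpdef
  have hp : -1 < p := by simp only [hpdef]; linarith
  have hp1 : (0:ℝ) < p + 1 := by linarith
  set M : ℝ := max 1 ((2:ℝ) ^ p) with hMdef
  have hM1 : (1:ℝ) ≤ M := le_max_left _ _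
  have hM0 : (0:ℝ) < M := lt_of_lt_of_le one_pos hM1
  set c : ℝ := Real.sqrt π * 2 ^ α * Real.Gamma (α + 1/2) with hcdef
  have hc : 0 < c := by
    have h1 : 0 < Real.sqrt π := Real.sqrt_pos.2 Real.pi_pos
    have h2 : (0:ℝ) < 2 ^ α := Real.rpow_pos_of_pos two_pos α
    have h3 : 0 < Real.Gamma (α + 1/2) := Real.Gamma_pos_of_pos (by linarith)
    positivity
  set J : ℝ := 2 * M * (2 ^ (p+1) / (p+1)) with hJdef
  have hJ0 : 0 < J := by positivity
  set KB : ℝ := M * (1/(p+1) + 2 + 2 ^ (p+1) / (2*(p+1))) with hKBdef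
  have hKB0 : 0 < KB := by positivity
  refine ⟨(J * 3 ^ (2*α+2) + KB * 2 ^ (2*α+2) + 1) / c, by positivity, ?_⟩
  intro x y hx hy hxy
  set r : ℝ := |x - y| with hrdef
  have hr : 0 < r := abs_pos.2 (sub_ne_zero.2 hxy)
  have hr2 : (r:ℝ)^2 = (x - y)^2 := sq_abs _
  have he : -(1+α) ≤ 0 := by linarith
  -- the denominator
  set A : ℝ := max 0 (x - r) with hAdef
  have hA0 : 0 ≤ A := le_max_left _ _
  have hAB : A ≤ x + r := max_le (by positivity) (by linarith)
  have hABlt : A < x + r := lt_of_le_of_lt (max_le_max le_rfl (by linarith : x - r ≤ x)) (by simp [max_lt_iff]; constructor <;> linarith)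
  set W : ℝ := ∫ u in Set.Ioo A (x + r), u ^ (2*α+1) with hWdef
  have hWeq : W = ((x+r) ^ (2*α+2) - A ^ (2*α+2))/(2*α+2) := by
    rw [hWdef, NS_powint (2*α+1) (by linarith) A (x+r) hA0 hAB]
    ring_nf
  have hWpos : 0 < W := by
    rw [hWeq]
    apply div_pos _ (by linarith)
    have := Real.rpow_lt_rpow hA0 hABlt (by linarith : (0:ℝ) < 2*α+2)
    linarith
  have hWub : W ≤ (x + r - A) * (x + r) ^ (2*α+1) := by
    have hint : IntegrableOn (fun u : ℝ => u ^ (2*α+1)) (Set.Ioo A (x+r)) volume :=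
      ((intervalIntegrable_rpow' (by linarith) (a := A) (b := x+r)).1).mono_set
        Set.Ioo_subset_Ioc_self
    have hconst : IntegrableOn (fun _ : ℝ => (x+r) ^ (2*α+1)) (Set.Ioo A (x+r)) volume :=
      integrableOn_const measure_Ioo_lt_top.ne
    have hmono := setIntegral_mono_on hint hconst measurableSet_Ioo (fun u hu =>
      Real.rpow_le_rpow (le_trans hA0 hu.1.le) hu.2.le (by linarith))
    rwa [setIntegral_const, Measure.real, Real.volume_Ioo, smul_eq_mul,
      ENNReal.toReal_ofReal (by linarith)] at hmono
  -- the numerator: rewrite as I / c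
  set q : ℝ → ℝ := fun s => x^2 + y^2 + 2*x*y*s with hqdef
  set f : ℝ → ℝ := fun s => q s ^ (-(1+α)) * (1 - s^2) ^ p with hfdef
  set I : ℝ := ∫ s in (-1:ℝ)..1, f s with hIdef
  have hnum : (∫ s in Set.Icc (-1 : ℝ) 1, q s ^ (-(1 + α)) * ((1 - s^2) ^ p / c)) = I / c := by
    simp only [← mul_div_assoc]
    rw [MeasureTheory.integral_div, hIdef,
      intervalIntegral.integral_of_le (by norm_num : (-1:ℝ) ≤ 1),
      MeasureTheory.integral_Icc_eq_integral_Ioc]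
  rw [hnum, div_le_div_iff₀ hc hWpos]
  have hCc : (J * 3 ^ (2*α+2) + KB * 2 ^ (2*α+2) + 1) / c * c
      = J * 3 ^ (2*α+2) + KB * 2 ^ (2*α+2) + 1 := div_mul_cancel₀ _ (ne_of_gt hc)
  rw [hCc]
  -- measurability of f
  have hfm : ∀ u v : ℝ, AEStronglyMeasurable f (volume.restrict (Set.uIoc u v)) := by
    intro u v
    have hfmeas : Measurable f := by
      have : f = fun s => (x^2 + y^2 + 2*x*y*s) ^ (-(1+α)) * (1 - s^2) ^ p := rfl
      rw [this]; fun_prop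
    exact hfmeas.aestronglyMeasurable
  have hq_lb : ∀ s ∈ Set.Icc (-1:ℝ) 1, (x-y)^2 ≤ q s := by
    intro s hs
    simp only [hqdef]
    nlinarith [mul_pos hx hy, hs.1]
  have hq_pos : ∀ s ∈ Set.Icc (-1:ℝ) 1, 0 < q s := fun s hs =>
    lt_of_lt_of_le (by have := sub_ne_zero.2 hxy; positivity) (hq_lb s hs)
  have hsplit : ∀ s ∈ Set.Icc (-1:ℝ) 1, ((1 - s^2 : ℝ)) ^ p = (1-s) ^ p * (s+1) ^ p := by
    intro s hs
    rw [show (1 - s^2 : ℝ) = (1-s)*(s+1) by ring,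
      Real.mul_rpow (by linarith [hs.2]) (by linarith [hs.1])]
  rcases le_or_gt x (2*r) with hcase | hcase
  · -- case A
    have hIA : I ≤ J * r ^ (-(2*α+2)) := by
      set gA : ℝ → ℝ := fun s => r ^ (-(2*α+2)) * (M * (1-s) ^ p + M * (s+1) ^ p) with hgAdef
      have hgint : IntervalIntegrable gA volume (-1) 1 :=
        (((NS_refl_intgr p hp).const_mul M).add ((NS_shift_intgr p hp).const_mul M)).const_mul _
      have hpt : ∀ s ∈ Set.Icc (-1:ℝ) 1, f s ≤ gA s := by
        intro s hs
        have h1 : q s ^ (-(1+α)) ≤ r ^ (-(2*α+2)) := by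
          have hrq : (r:ℝ)^2 ≤ q s := by rw [hr2]; exact hq_lb s hs
          have h2 := Real.rpow_le_rpow_of_nonpos (by positivity : (0:ℝ) < r^2) hrq he
          calc q s ^ (-(1+α)) ≤ ((r:ℝ)^2) ^ (-(1+α)) := h2
          _ = r ^ (-(2*α+2)) := by
              rw [← Real.rpow_natCast r 2, ← Real.rpow_mul hr.le]
              congr 1; push_cast; ring
        have h3 : (1 - s^2:ℝ) ^ p ≤ M * (1-s) ^ p + M * (s+1) ^ p := by
          rw [hsplit s hs]
          rcases le_or_gt s 0 with hs0 | hs0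
          · have hM' : (1-s:ℝ) ^ p ≤ M := NS_M p _ (by linarith) (by linarith [hs.1])
            have h4 : (1-s:ℝ)^p * (s+1)^p ≤ M * (s+1)^p :=
              mul_le_mul_of_nonneg_right hM' (Real.rpow_nonneg (by linarith [hs.1]) p)
            have h5 : (0:ℝ) ≤ M * (1-s:ℝ)^p := by
              have := Real.rpow_nonneg (by linarith [hs.2] : (0:ℝ) ≤ 1 - s) p
              positivity
            linarith
          · have hM' : (s+1:ℝ) ^ p ≤ M := NS_M p _ (by linarith) (by linarith [hs.2])
            have h4 : (1-s:ℝ)^p * (s+1)^p ≤ (1-s)^p * M :=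
              mul_le_mul_of_nonneg_left hM' (Real.rpow_nonneg (by linarith [hs.2]) p)
            have h5 : (0:ℝ) ≤ M * (s+1:ℝ)^p := by
              have := Real.rpow_nonneg (by linarith [hs.1] : (0:ℝ) ≤ s + 1) p
              positivity
            nlinarith
        have h1s : (0:ℝ) ≤ 1 - s^2 := by nlinarith [hs.1, hs.2]
        calc f s = q s ^ (-(1+α)) * (1 - s^2) ^ p := rfl
        _ ≤ r ^ (-(2*α+2)) * (M * (1-s) ^ p + M * (s+1) ^ p) :=
            mul_le_mul h1 h3 (Real.rpow_nonneg h1s p) (by positivity)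
      have hfint : IntervalIntegrable f volume (-1) 1 := by
        apply hgint.mono_fun' (hfm _ _)
        rw [Set.uIoc_of_le (by norm_num : (-1:ℝ) ≤ 1)]
        filter_upwards [ae_restrict_mem measurableSet_Ioc] with s hs
        have hs' : s ∈ Set.Icc (-1:ℝ) 1 := Set.Ioc_subset_Icc_self hs
        have hf0 : 0 ≤ f s := mul_nonneg (Real.rpow_nonneg (hq_pos s hs').le _)
          (Real.rpow_nonneg (by nlinarith only [hs'.1, hs'.2]) _)
        simpa [Real.norm_eq_abs, abs_of_nonneg hf0] using hpt s hs'
      have hInt := intervalIntegral.integral_mono_on (by norm_num : (-1:ℝ) ≤ 1) hfint hgint hpt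
      have hval : (∫ s in (-1:ℝ)..1, gA s) = J * r ^ (-(2*α+2)) := by
        have e0 : (∫ s in (-1:ℝ)..1, gA s)
            = r ^ (-(2*α+2)) * ∫ s in (-1:ℝ)..1, (M * (1-s) ^ p + M * (s+1) ^ p) :=
          intervalIntegral.integral_const_mul _ _
        rw [e0, intervalIntegral.integral_add ((NS_refl_intgr p hp).const_mul M)
            ((NS_shift_intgr p hp).const_mul M),
          intervalIntegral.integral_const_mul, intervalIntegral.integral_const_mul,
          NS_refl_val p hp, NS_shift_val p hp]
        ring
      rw [hIdef, ← hval]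
      exact hInt
    have hWA : W ≤ 3 * r * (3*r) ^ (2*α+1) := by
      calc W ≤ (x + r - A) * (x+r) ^ (2*α+1) := hWub
      _ ≤ 3*r * (3*r) ^ (2*α+1) :=
          mul_le_mul (by linarith)
            (Real.rpow_le_rpow (by positivity) (by linarith) (by linarith))
            (by positivity) (by positivity)
    have halgA : J * r ^ (-(2*α+2)) * (3 * r * (3*r) ^ (2*α+1)) = J * 3 ^ (2*α+2) := by
      have e1 : (3*r) ^ (2*α+1) = 3 ^ (2*α+1) * r ^ (2*α+1) := Real.mul_rpow (by norm_num) hr.le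
      have er : r ^ (-(2*α+2)) * (r * r ^ (2*α+1)) = 1 := by
        have h1 : r * r ^ (2*α+1) = r ^ (2*α+2) := by
          have h2 := Real.rpow_add_one hr.ne' (2*α+1)
          rw [show (2*α+2) = 2*α+1+1 by ring, h2]; ring
        rw [h1, ← Real.rpow_add hr, show -(2*α+2)+(2*α+2) = 0 by ring, Real.rpow_zero]
      have e3 : (3:ℝ) * 3 ^ (2*α+1) = 3 ^ (2*α+2) := by
        have h2 := Real.rpow_add_one (by norm_num : (3:ℝ) ≠ 0) (2*α+1)
        rw [show (2*α+2) = 2*α+1+1 by ring, h2]; ring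
      rw [e1, show J * r ^ (-(2*α+2)) * (3 * r * (3 ^ (2*α+1) * r ^ (2*α+1)))
          = J * (3 * 3 ^ (2*α+1)) * (r ^ (-(2*α+2)) * (r * r ^ (2*α+1))) by ring, er, e3]
      ring
    have h1 : I * W ≤ J * r ^ (-(2*α+2)) * (3 * r * (3*r) ^ (2*α+1)) :=
      mul_le_mul hIA hWA hWpos.le (by positivity)
    have h2 : (0:ℝ) ≤ KB * 2 ^ (2*α+2) := by positivity
    rw [halgA] at h1
    linarith only [h1, h2]
  · -- case B
    have hIB : I ≤ KB * (r⁻¹ * x ^ (-(2*α+1))) := by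
      have hyx : x < 2*y := by
        have h1 : x - y ≤ r := le_abs_self _
        linarith only [h1, hcase]
      have hx2e : ((x^2:ℝ)) ^ (-(1+α)) = x⁻¹ * x ^ (-(2*α+1)) := by
        rw [← Real.rpow_natCast x 2, ← Real.rpow_mul hx.le,
          show ((2:ℕ):ℝ) * (-(1+α)) = -1 + -(2*α+1) by push_cast; ring,
          Real.rpow_add hx, Real.rpow_neg_one]
      set gB : ℝ → ℝ := fun s =>
        M * ((r^2 + x^2*(s+1)) ^ (-(1+α)) * (s+1) ^ p)
          + (M * ((x^2:ℝ)) ^ (-(1+α))) * (1-s) ^ p with hgBdef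
      have hcont : ContinuousOn (fun s : ℝ => (r^2 + x^2*(s+1)) ^ (-(1+α)))
          (Set.uIcc (-1:ℝ) 1) := by
        apply ContinuousOn.rpow_const
        · fun_prop
        · intro s hs
          rw [Set.uIcc_of_le (by norm_num : (-1:ℝ) ≤ 1)] at hs
          have : (0:ℝ) < r^2 + x^2*(s+1) := by
            linarith only [mul_nonneg (sq_nonneg x) (by linarith only [hs.1] : (0:ℝ) ≤ s+1),
              pow_pos hr 2]
          exact Or.inl this.ne'
      have hI1int : IntervalIntegrable
          (fun s : ℝ => (r^2 + x^2*(s+1)) ^ (-(1+α)) * (s+1) ^ p) volume (-1) 1 :=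
        (NS_shift_intgr p hp).continuousOn_mul hcont
      have hgint : IntervalIntegrable gB volume (-1) 1 :=
        (hI1int.const_mul M).add ((NS_refl_intgr p hp).const_mul _)
      have hpt : ∀ s ∈ Set.Icc (-1:ℝ) 1, f s ≤ gB s := by
        intro s hs
        have hs1 : (0:ℝ) ≤ s + 1 := by linarith only [hs.1]
        have hs2 : (0:ℝ) ≤ 1 - s := by linarith only [hs.2]
        have hp1n : (0:ℝ) ≤ (s+1:ℝ) ^ p := Real.rpow_nonneg hs1 p
        have hp2n : (0:ℝ) ≤ (1-s:ℝ) ^ p := Real.rpow_nonneg hs2 p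
        have hbase : (0:ℝ) < r^2 + x^2*(s+1) := by
          linarith only [mul_nonneg (sq_nonneg x) hs1, pow_pos hr 2]
        have hfeq : f s = q s ^ (-(1+α)) * ((1-s) ^ p * (s+1) ^ p) := by
          show q s ^ (-(1+α)) * (1 - s^2) ^ p = _
          rw [hsplit s hs]
        rcases le_or_gt s 0 with hs0 | hs0
        · have h1 : q s ^ (-(1+α)) ≤ (r^2 + x^2*(s+1)) ^ (-(1+α)) := by
            apply Real.rpow_le_rpow_of_nonpos hbase _ he
            have key : (0:ℝ) ≤ x*(2*y-x)*(s+1) :=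
              mul_nonneg (mul_nonneg hx.le (by linarith only [hyx])) hs1
            have hqs : q s = x^2 + y^2 + 2*x*y*s := rfl
            rw [hqs, hr2]; linarith only [key]
          have h2 : (1-s:ℝ) ^ p ≤ M := NS_M p _ (by linarith only [hs0])
            (by linarith only [hs.1])
          have h3 : q s ^ (-(1+α)) * ((1-s) ^ p * (s+1) ^ p)
              ≤ (r^2 + x^2*(s+1)) ^ (-(1+α)) * (M * (s+1) ^ p) :=
            mul_le_mul h1 (mul_le_mul_of_nonneg_right h2 hp1n)
              (mul_nonneg hp2n hp1n) (Real.rpow_nonneg hbase.le _)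
          have h4 : (0:ℝ) ≤ (M * ((x^2:ℝ)) ^ (-(1+α))) * (1-s) ^ p := by
            have := Real.rpow_nonneg (sq_nonneg x) (-(1+α))
            positivity
          have h5 : (r^2 + x^2*(s+1)) ^ (-(1+α)) * (M * (s+1) ^ p)
              = M * ((r^2 + x^2*(s+1)) ^ (-(1+α)) * (s+1) ^ p) := by ring
          rw [hfeq]
          show _ ≤ M * ((r^2 + x^2*(s+1)) ^ (-(1+α)) * (s+1) ^ p)
            + (M * ((x^2:ℝ)) ^ (-(1+α))) * (1-s) ^ p
          rw [← h5]; linarith only [h3, h4]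
        · have h1 : q s ^ (-(1+α)) ≤ ((x^2:ℝ)) ^ (-(1+α)) := by
            apply Real.rpow_le_rpow_of_nonpos (by positivity) _ he
            have hqs : q s = x^2 + y^2 + 2*x*y*s := rfl
            rw [hqs]
            have k2 : (0:ℝ) ≤ 2*x*y*s :=
              mul_nonneg (by positivity) hs0.le
            linarith only [k2, sq_nonneg y]
          have h2 : (s+1:ℝ) ^ p ≤ M := NS_M p _ (by linarith only [hs0])
            (by linarith only [hs.2])
          have h3 : q s ^ (-(1+α)) * ((1-s) ^ p * (s+1) ^ p)
              ≤ ((x^2:ℝ)) ^ (-(1+α)) * ((1-s) ^ p * M) :=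
            mul_le_mul h1 (mul_le_mul_of_nonneg_left h2 hp2n)
              (mul_nonneg hp2n hp1n) (Real.rpow_nonneg (by positivity) _)
          have h4 : (0:ℝ) ≤ M * ((r^2 + x^2*(s+1)) ^ (-(1+α)) * (s+1) ^ p) := by
            have := Real.rpow_nonneg hbase.le (-(1+α))
            positivity
          have h5 : ((x^2:ℝ)) ^ (-(1+α)) * ((1-s) ^ p * M)
              = (M * ((x^2:ℝ)) ^ (-(1+α))) * (1-s) ^ p := by ring
          rw [hfeq]
          show _ ≤ M * ((r^2 + x^2*(s+1)) ^ (-(1+α)) * (s+1) ^ p)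
            + (M * ((x^2:ℝ)) ^ (-(1+α))) * (1-s) ^ p
          linarith only [h3.trans_eq h5, h4]
      have hfint : IntervalIntegrable f volume (-1) 1 := by
        apply hgint.mono_fun' (hfm _ _)
        rw [Set.uIoc_of_le (by norm_num : (-1:ℝ) ≤ 1)]
        filter_upwards [ae_restrict_mem measurableSet_Ioc] with s hs
        have hs' : s ∈ Set.Icc (-1:ℝ) 1 := Set.Ioc_subset_Icc_self hs
        have hf0 : 0 ≤ f s := mul_nonneg (Real.rpow_nonneg (hq_pos s hs').le _)
          (Real.rpow_nonneg (by nlinarith only [hs'.1, hs'.2]) _)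
        simpa [Real.norm_eq_abs, abs_of_nonneg hf0] using hpt s hs'
      have hInt := intervalIntegral.integral_mono_on (by norm_num : (-1:ℝ) ≤ 1) hfint hgint hpt
      set U : ℝ := r⁻¹ * x ^ (-(2*α+1)) with hUdef
      have hU0 : 0 < U := by
        have := Real.rpow_pos_of_pos hx (-(2*α+1))
        positivity
      have hgval : (∫ s in (-1:ℝ)..1, gB s)
          = M * (∫ s in (-1:ℝ)..1, (r^2 + x^2*(s+1)) ^ (-(1+α)) * (s+1) ^ p)
            + (M * ((x^2:ℝ)) ^ (-(1+α))) * (2 ^ (p+1)/(p+1)) := by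
        rw [hgBdef]
        rw [intervalIntegral.integral_add (hI1int.const_mul M)
          ((NS_refl_intgr p hp).const_mul _), intervalIntegral.integral_const_mul,
          intervalIntegral.integral_const_mul, NS_refl_val p hp]
      have hshift : (∫ s in (-1:ℝ)..1, (r^2 + x^2*(s+1)) ^ (-(1+α)) * (s+1) ^ p)
          = ∫ t in (0:ℝ)..2, (r^2 + x^2*t) ^ (-(1+α)) * t ^ p := by
        have h := intervalIntegral.integral_comp_add_right (a := (-1:ℝ)) (b := 1)
          (fun t : ℝ => (r^2 + x^2*t) ^ (-(1+α)) * t ^ p) 1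
        rw [show (-1:ℝ)+1 = 0 by norm_num, show (1:ℝ)+1 = 2 by norm_num] at h
        rw [← h]
      have hI1 : (∫ s in (-1:ℝ)..1, (r^2 + x^2*(s+1)) ^ (-(1+α)) * (s+1) ^ p)
          ≤ (1/(p+1)) * U + 2 * U := by
        rw [hshift]
        set F : ℝ → ℝ := fun t => (r^2 + x^2*t) ^ (-(1+α)) * t ^ p with hFdef
        set m : ℝ := (r/x)^2 with hmdef
        have hm0 : 0 < m := by positivity
        have hm1 : m < 1 := by
          have hrx : r/x < 1 := by rw [div_lt_one hx]; linarith only [hcase, hr]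
          have hrx0 : 0 < r/x := div_pos hr hx
          show (r/x)^2 < 1
          nlinarith only [hrx, hrx0]
        have hm2 : m ≤ 2 := by linarith only [hm1]
        have hcont2 : ContinuousOn (fun t : ℝ => (r^2 + x^2*t) ^ (-(1+α)))
            (Set.uIcc (0:ℝ) 2) := by
          apply ContinuousOn.rpow_const
          · fun_prop
          · intro t ht
            rw [Set.uIcc_of_le (by norm_num : (0:ℝ) ≤ 2)] at ht
            have : (0:ℝ) < r^2 + x^2*t := by
              linarith only [mul_nonneg (sq_nonneg x) ht.1, pow_pos hr 2]
            exact Or.inl this.ne'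
        have hF02 : IntervalIntegrable F volume 0 2 :=
          (intervalIntegrable_rpow' hp).continuousOn_mul hcont2
        have hF0m : IntervalIntegrable F volume 0 m := hF02.mono_set (by
          rw [Set.uIcc_of_le hm0.le, Set.uIcc_of_le (by norm_num : (0:ℝ) ≤ 2)]
          exact Set.Icc_subset_Icc le_rfl hm2)
        have hFm2 : IntervalIntegrable F volume m 2 := hF02.mono_set (by
          rw [Set.uIcc_of_le hm2, Set.uIcc_of_le (by norm_num : (0:ℝ) ≤ 2)]
          exact Set.Icc_subset_Icc hm0.le le_rfl)
        have hsplit2 : (∫ t in (0:ℝ)..2, F t) = (∫ t in (0:ℝ)..m, F t) + ∫ t in m..2, F t :=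
          (intervalIntegral.integral_add_adjacent_intervals hF0m hFm2).symm
        have hb1 : (∫ t in (0:ℝ)..m, F t) ≤ (1/(p+1)) * U := by
          have hptw : ∀ t ∈ Set.Icc (0:ℝ) m, F t ≤ ((r:ℝ)^2) ^ (-(1+α)) * t ^ p := by
            intro t ht
            have h1 : (r:ℝ)^2 ≤ r^2 + x^2 * t := by
              linarith only [mul_nonneg (sq_nonneg x) ht.1]
            exact mul_le_mul_of_nonneg_right
              (Real.rpow_le_rpow_of_nonpos (by positivity) h1 he) (Real.rpow_nonneg ht.1 p)
          have hmono := intervalIntegral.integral_mono_on hm0.le hF0m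
            ((intervalIntegrable_rpow' hp).const_mul (((r:ℝ)^2) ^ (-(1+α)))) hptw
          have hcmp : (∫ t in (0:ℝ)..m, ((r:ℝ)^2) ^ (-(1+α)) * t ^ p)
              = ((r:ℝ)^2) ^ (-(1+α)) * (m ^ (p+1) / (p+1)) := by
            rw [intervalIntegral.integral_const_mul, integral_rpow (Or.inl hp),
              Real.zero_rpow (by linarith : p+1 ≠ 0)]
            ring
          have er2 : ((r:ℝ)^2) ^ (-(1+α)) = r ^ (-(2*α+2)) := by
            rw [← Real.rpow_natCast r 2, ← Real.rpow_mul hr.le]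
            congr 1; push_cast; ring
          have em : m ^ (p+1) = r ^ (2*α+1) * x ^ (-(2*α+1)) := by
            rw [hmdef, ← Real.rpow_natCast (r/x) 2, ← Real.rpow_mul (by positivity),
              show ((2:ℕ):ℝ) * (p+1) = 2*α+1 by push_cast; rw [hpdef]; ring,
              Real.div_rpow hr.le hx.le, div_eq_mul_inv, ← Real.rpow_neg hx.le]
          have err : r ^ (-(2*α+2)) * r ^ (2*α+1) = r⁻¹ := by
            rw [← Real.rpow_add hr, show (-(2*α+2)+(2*α+1)) = -1 by ring, Real.rpow_neg_one]
          have halg1 : ((r:ℝ)^2) ^ (-(1+α)) * (m ^ (p+1) / (p+1)) = (1/(p+1)) * U := by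
            rw [er2, em, hUdef,
              show r ^ (-(2*α+2)) * (r ^ (2*α+1) * x ^ (-(2*α+1)) / (p+1))
                = (r ^ (-(2*α+2)) * r ^ (2*α+1)) * x ^ (-(2*α+1)) / (p+1) by ring, err]
            ring
          calc (∫ t in (0:ℝ)..m, F t) ≤ _ := hmono
          _ = (1/(p+1)) * U := by rw [hcmp, halg1]
        have hb2 : (∫ t in m..2, F t) ≤ 2 * U := by
          have h0nm : (0:ℝ) ∉ Set.uIcc m 2 := by
            rw [Set.uIcc_of_le hm2]
            intro h
            exact absurd h.1 (not_le.2 hm0)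
          have hGint : IntervalIntegrable
              (fun t : ℝ => ((x:ℝ)^2) ^ (-(1+α)) * t ^ (-(3:ℝ)/2)) volume m 2 :=
            (intervalIntegrable_rpow (Or.inr h0nm)).const_mul _
          have hptw2 : ∀ t ∈ Set.Icc m 2, F t ≤ ((x:ℝ)^2) ^ (-(1+α)) * t ^ (-(3:ℝ)/2) := by
            intro t ht
            have ht0 : 0 < t := lt_of_lt_of_le hm0 ht.1
            have h1 : (r^2 + x^2*t : ℝ) ^ (-(1+α)) ≤ ((x:ℝ)^2 * t) ^ (-(1+α)) :=
              Real.rpow_le_rpow_of_nonpos (by positivity) (by linarith only [sq_nonneg r]) he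
            have h2 : ((x:ℝ)^2 * t) ^ (-(1+α)) = ((x:ℝ)^2) ^ (-(1+α)) * t ^ (-(1+α)) :=
              Real.mul_rpow (by positivity) ht0.le
            have h3 : F t ≤ ((x:ℝ)^2) ^ (-(1+α)) * t ^ (-(1+α)) * t ^ p :=
              mul_le_mul_of_nonneg_right (h1.trans_eq h2) (Real.rpow_nonneg ht0.le p)
            have h4 : ((x:ℝ)^2) ^ (-(1+α)) * t ^ (-(1+α)) * t ^ p
                = ((x:ℝ)^2) ^ (-(1+α)) * t ^ (-(3:ℝ)/2) := by
              rw [mul_assoc, ← Real.rpow_add ht0,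
                show (-(1+α) + p) = -(3:ℝ)/2 by rw [hpdef]; ring]
            exact h3.trans_eq h4
          have hmono := intervalIntegral.integral_mono_on hm2 hFm2 hGint hptw2
          have hval2 : (∫ t in m..2, ((x:ℝ)^2) ^ (-(1+α)) * t ^ (-(3:ℝ)/2))
              = ((x:ℝ)^2) ^ (-(1+α))
                * ((2 ^ (-(3:ℝ)/2+1) - m ^ (-(3:ℝ)/2+1))/(-(3:ℝ)/2+1)) := by
            rw [intervalIntegral.integral_const_mul, integral_rpow (Or.inr ⟨by norm_num, h0nm⟩)]
          have em2 : m ^ (-(3:ℝ)/2+1) = x/r := by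
            rw [hmdef, ← Real.rpow_natCast (r/x) 2, ← Real.rpow_mul (by positivity),
              show ((2:ℕ):ℝ) * (-(3:ℝ)/2+1) = -1 by push_cast; ring,
              Real.rpow_neg_one, inv_div]
          have hfin : ((x:ℝ)^2) ^ (-(1+α))
              * ((2 ^ (-(3:ℝ)/2+1) - m ^ (-(3:ℝ)/2+1))/(-(3:ℝ)/2+1)) ≤ 2 * U := by
            rw [em2, hx2e, hUdef, show (-(3:ℝ)/2+1) = -(1/2 : ℝ) by norm_num]
            have h2p : (0:ℝ) ≤ (2:ℝ) ^ (-(1/2:ℝ)) := Real.rpow_nonneg (by norm_num) _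
            have hxp : (0:ℝ) < x ^ (-(2*α+1)) := Real.rpow_pos_of_pos hx _
            have key : ((2:ℝ) ^ (-(1/2:ℝ)) - x/r)/(-(1/2:ℝ)) ≤ 2*(x/r) := by
              rw [div_le_iff_of_neg (by norm_num : (-(1/2:ℝ)) < 0)]
              have hxr0 : 0 < x/r := div_pos hx hr
              linarith only [h2p]
            have hnn : (0:ℝ) ≤ x⁻¹ * x ^ (-(2*α+1)) := by positivity
            calc x⁻¹ * x ^ (-(2*α+1)) * (((2:ℝ) ^ (-(1/2:ℝ)) - x/r)/(-(1/2:ℝ)))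
                ≤ x⁻¹ * x ^ (-(2*α+1)) * (2*(x/r)) := mul_le_mul_of_nonneg_left key hnn
            _ = 2 * (r⁻¹ * x ^ (-(2*α+1))) * (x⁻¹ * x) := by ring
            _ = 2 * (r⁻¹ * x ^ (-(2*α+1))) := by rw [inv_mul_cancel₀ hx.ne']; ring
          exact hmono.trans (by rw [hval2]; exact hfin)
        rw [hsplit2]
        exact add_le_add hb1 hb2
      have hsec : (M * ((x^2:ℝ)) ^ (-(1+α))) * (2 ^ (p+1)/(p+1))
          ≤ M * (2 ^ (p+1)/(2*(p+1))) * U := by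
        rw [hx2e]
        have hxr : x⁻¹ ≤ (2*r)⁻¹ := by
          apply inv_anti₀ (by positivity) (by linarith only [hcase])
        have hxp : (0:ℝ) ≤ x ^ (-(2*α+1)) := (Real.rpow_pos_of_pos hx _).le
        have h6 : M * (x⁻¹ * x ^ (-(2*α+1))) * (2 ^ (p+1)/(p+1))
            = (M * (2 ^ (p+1)/(p+1)) * x ^ (-(2*α+1))) * x⁻¹ := by ring
        have h7 : M * (2 ^ (p+1)/(2*(p+1))) * U
            = (M * (2 ^ (p+1)/(p+1)) * x ^ (-(2*α+1))) * (2*r)⁻¹ := by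
          rw [hUdef]; field_simp
        rw [h6, h7]
        apply mul_le_mul_of_nonneg_left hxr
        positivity
      calc I ≤ ∫ s in (-1:ℝ)..1, gB s := hInt
      _ ≤ M * ((1/(p+1)) * U + 2 * U) + M * (2 ^ (p+1)/(2*(p+1))) * U := by
          rw [hgval]
          have := mul_le_mul_of_nonneg_left hI1 hM0.le
          linarith only [this, hsec]
      _ = KB * U := by rw [hKBdef]; ring
    have hWB : W ≤ 2 * r * (2*x) ^ (2*α+1) := by
      have hA : A = x - r := max_eq_right (by linarith)
      calc W ≤ (x + r - A) * (x+r) ^ (2*α+1) := hWub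
      _ = 2*r * (x+r) ^ (2*α+1) := by rw [hA]; ring_nf
      _ ≤ 2*r * (2*x) ^ (2*α+1) := by
          apply mul_le_mul_of_nonneg_left
            (Real.rpow_le_rpow (by positivity) (by linarith) (by linarith)) (by positivity)
    have halgB : KB * (r⁻¹ * x ^ (-(2*α+1))) * (2 * r * (2*x) ^ (2*α+1)) = KB * 2 ^ (2*α+2) := by
      have e1 : (2*x) ^ (2*α+1) = 2 ^ (2*α+1) * x ^ (2*α+1) := Real.mul_rpow (by norm_num) hx.le
      have e2 : x ^ (-(2*α+1)) * x ^ (2*α+1) = 1 := by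
        rw [← Real.rpow_add hx, show -(2*α+1)+(2*α+1) = 0 by ring, Real.rpow_zero]
      have e3 : (2:ℝ) * 2 ^ (2*α+1) = 2 ^ (2*α+2) := by
        have h2 := Real.rpow_add_one (by norm_num : (2:ℝ) ≠ 0) (2*α+1)
        rw [show (2*α+2) = 2*α+1+1 by ring, h2]; ring
      rw [e1, show KB * (r⁻¹ * x ^ (-(2*α+1))) * (2 * r * (2 ^ (2*α+1) * x ^ (2*α+1)))
          = KB * (2 * 2 ^ (2*α+1)) * (r⁻¹ * r) * (x ^ (-(2*α+1)) * x ^ (2*α+1)) by ring,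
        e2, e3, inv_mul_cancel₀ (ne_of_gt hr)]
      ring
    have h1 : I * W ≤ KB * (r⁻¹ * x ^ (-(2*α+1))) * (2 * r * (2*x) ^ (2*α+1)) :=
      mul_le_mul hIB hWB hWpos.le (by positivity)
    have h2 : (0:ℝ) ≤ J * 3 ^ (2*α+2) := by positivity
    rw [halgB] at h1
    linarith only [h1, h2]
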